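/- Lower bound on winning probability: in the K-stage coupon lottery with M participants, if agent 1 holds r_min coupons and each opponent holds at most r_max coupons (with 0 < r_min ≤ r_max), then agent 1's winning probability is at least 1 − (1 − r_min/(r_min + (M−1) r_max))^K, which lies in (0,1). -/

import Mathlib

/-!
Removing winners only shrinks the opponents' total mass, so at every stage the chance that an
opponent wins is at most `S / (r + S)`, where `S` bounds the initial opponents' total. Hence the
agent loses all `K` stages with probability at most `(S / (r + S)) ^ K`, exactly as in the scheme
where winners are not removed. With `S = (M - 1) * rmax` this is the claimed bound.
-/

/-- Probability that an agent with coupon count `r` fails to be among the first `K`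
winners of a Plackett-Luce lottery against opponents with coupon counts `opp`. -/
noncomputable def lossProb (r : ℝ) : ℕ → List ℝ → ℝ
  | 0, _ => 1
  | K + 1, opp =>
      ∑ i ∈ Finset.range opp.length,
        (opp.getD i 0 / (r + opp.sum)) * lossProb r K (opp.eraseIdx i)

theorem List.sum_range_getD {M : Type*} [AddCommMonoid M] (l : List M) :
    ∑ i ∈ Finset.range l.length, l.getD i 0 = l.sum := by
  simp [Finset.sum_range]

theorem div_add_self_le_div_add_self {r T S : ℝ} (hr : 0 < r) (hT : 0 ≤ T) (hTS : T ≤ S) :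
    T / (r + T) ≤ S / (r + S) := by
  rw [div_le_div_iff₀ (by linarith) (by linarith)]
  nlinarith

theorem lossProb_le_pow {r S : ℝ} (hr : 0 < r) :
    ∀ (K : ℕ) (opp : List ℝ), (∀ c ∈ opp, 0 ≤ c) → opp.sum ≤ S →
      lossProb r K opp ≤ (S / (r + S)) ^ K
  | 0, _, _, _ => by simp [lossProb]
  | K + 1, opp, hnonneg, hsum => by
    have hT : 0 ≤ opp.sum := List.sum_nonneg hnonneg
    have herase (i : ℕ) : lossProb r K (opp.eraseIdx i) ≤ (S / (r + S)) ^ K :=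
      lossProb_le_pow hr K _ (fun c hc => hnonneg c ((opp.eraseIdx_sublist i).subset hc))
        (((opp.eraseIdx_sublist i).sum_le_sum hnonneg).trans hsum)
    calc lossProb r (K + 1) opp
        ≤ ∑ i ∈ Finset.range opp.length, opp.getD i 0 / (r + opp.sum) * (S / (r + S)) ^ K := by
          refine Finset.sum_le_sum fun i hi => mul_le_mul_of_nonneg_left (herase i) ?_
          have hi : i < opp.length := Finset.mem_range.mp hi
          rw [List.getD_eq_getElem _ _ hi]
          exact div_nonneg (hnonneg _ (List.getElem_mem hi)) (by linarith)
      _ = opp.sum / (r + opp.sum) * (S / (r + S)) ^ K := by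
          rw [← Finset.sum_mul, ← Finset.sum_div, List.sum_range_getD]
      _ ≤ S / (r + S) * (S / (r + S)) ^ K := by
          have hS : 0 ≤ S := hT.trans hsum
          exact mul_le_mul_of_nonneg_right (div_add_self_le_div_add_self hr hT hsum)
            (by positivity)
      _ = (S / (r + S)) ^ (K + 1) := (pow_succ' _ _).symm

theorem one_sub_pow_mem_Ioo {q : ℝ} (hq0 : 0 < q) (hq1 : q < 1) {K : ℕ} (hK : K ≠ 0) :
    1 - q ^ K ∈ Set.Ioo (0 : ℝ) 1 :=
  ⟨sub_pos.mpr (pow_lt_one₀ hq0.le hq1 hK), sub_lt_self 1 (pow_pos hq0 K)⟩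

/-- Lower bound on the winning probability: if agent 1 holds `rmin` coupons and every
one of the `M - 1` opponents holds between `rmin` and `rmax` coupons
(`0 < rmin ≤ rmax`), then agent 1's probability of being among the first `K` winners
(`1 ≤ K < M`) is at least `1 - (1 - rmin/(rmin + (M-1)·rmax))^K`,
a quantity lying in `(0,1)`. -/
theorem winProb_lower_bound (M K : ℕ) (hK1 : 1 ≤ K) (hK : K < M) (rmin rmax : ℝ)
    (h0 : 0 < rmin) (hmm : rmin ≤ rmax) (opp : List ℝ) (hlen : opp.length = M - 1)
    (hopp : ∀ c ∈ opp, c ∈ Set.Icc rmin rmax) :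
    1 - (1 - rmin / (rmin + (M - 1 : ℝ) * rmax)) ^ K ≤ 1 - lossProb rmin K opp ∧
    1 - (1 - rmin / (rmin + (M - 1 : ℝ) * rmax)) ^ K ∈ Set.Ioo (0 : ℝ) 1 := by
  set S := (M - 1 : ℝ) * rmax
  have hS : 0 < S := by
    have : (1 : ℝ) < M := by exact_mod_cast hK1.trans_lt hK
    exact mul_pos (by linarith) (h0.trans_le hmm)
  have hq : 1 - rmin / (rmin + S) = S / (rmin + S) := by
    field_simp
    ring
  have hsum : opp.sum ≤ S := by
    have := List.sum_le_card_nsmul opp rmax fun c hc => (hopp c hc).2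
    rwa [hlen, nsmul_eq_mul, Nat.cast_pred (by omega)] at this
  have hloss := lossProb_le_pow h0 K opp (fun c hc => h0.le.trans (hopp c hc).1) hsum
  rw [hq]
  refine ⟨by linarith, one_sub_pow_mem_Ioo (by positivity) ?_ (by omega)⟩
  rw [div_lt_one (by positivity)]
  linarith
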